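/- Let N ≥ 1. For almost every window φ ∈ ℂ^N (with respect to Lebesgue measure) the following holds: for every pair (k,l) such that there exists a nonzero f ∈ ℂ^N with ‖f‖₀ = k and ‖f̂‖₀ = l, there exists a nonzero g ∈ ℂ^N with ‖g‖₀ = k and ‖V_φ g‖₀ = N² − N + l. In other words, F ⊆ F_φ for almost all φ, where F = {(‖f‖₀, ‖f̂‖₀) : f ≠ 0} and F_φ = {(‖g‖₀, ‖V_φ g‖₀ − N² + N) : g ≠ 0}. -/

import Mathlib

open MeasureTheory

/-- The number of nonzero coordinates `‖v‖₀` of a vector. -/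
noncomputable def suppSize {α : Type*} (v : α → ℂ) : ℕ := Nat.card {a // v a ≠ 0}

/-- The (unnormalized) discrete Fourier transform on `ℤ/Nℤ`. -/
noncomputable def dft (N : ℕ) [NeZero N] (f : ZMod N → ℂ) : ZMod N → ℂ :=
  fun k => ∑ g : ZMod N,
    Complex.exp (2 * Real.pi * Complex.I * k.val * g.val / N) * f g

/-- The short-time Fourier transform with window `φ`:
`(V_φ f)(x,ξ) = ∑_g e^{2πiξg/N} φ(g-x) f(g)`. -/
noncomputable def stft (N : ℕ) [NeZero N] (φ f : ZMod N → ℂ) :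
    ZMod N × ZMod N → ℂ :=
  fun p => ∑ g : ZMod N,
    Complex.exp (2 * Real.pi * Complex.I * p.2.val * g.val / N) *
      φ (g - p.1) * f g

/-!
For a window `φ` with no zero entries put `g = f / φ`. Then `V_φ g (0, ξ) = f̂ ξ`, while for
`x ≠ 0`, `V_φ g (x, ξ) = ∑ y, e^{2πiξy/N} f y · φ (y - x) / φ y`. Clearing denominators gives a
polynomial in the entries of `φ` which is not identically zero: at `φ y₀ = 0`, for `f y₀ ≠ 0`, only
the term `y = y₀` survives. Hence, in the coordinate `φ y₀`, every slice of its zero set among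
nonvanishing windows is finite, and that set is null by Fubini. So for almost every `φ` the
transform `V_φ g` vanishes nowhere off the line `x = 0`, whence `‖V_φ g‖₀ = N (N - 1) + ‖f̂‖₀`;
and `‖g‖₀ = ‖f‖₀`.
-/

namespace MeasureTheory.Measure

theorem pi_eq_zero_of_forall_update_null {ι : Type*} [Fintype ι] [DecidableEq ι]
    {X : ι → Type*} [∀ i, MeasurableSpace (X i)] {μ : ∀ i, Measure (X i)}
    [∀ i, SigmaFinite (μ i)] {S : Set (∀ i, X i)} (hS : MeasurableSet S) (i : ι)
    (h : ∀ x, μ i {t | Function.update x i t ∈ S} = 0) : Measure.pi μ S = 0 := by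
  rcases S.eq_empty_or_nonempty with rfl | ⟨x, -⟩
  · exact measure_empty
  have hslice : (fun x ↦ ∫⁻ t, S.indicator 1 (Function.update x i t) ∂μ i) = 0 := by
    funext x
    rw [Pi.zero_apply, ← h x]
    exact lintegral_indicator_one (hS.preimage (measurable_update x))
  rw [← lintegral_indicator_one hS, lintegral_eq_lmarginal_univ x,
    lmarginal_erase' _ (measurable_one.indicator hS) (Finset.mem_univ i), hslice]
  simp [lmarginal]

theorem ae_forall_ne_zero {ι : Type*} [Fintype ι] :
    ∀ᵐ φ ∂(volume : Measure (ι → ℂ)), ∀ i, φ i ≠ 0 :=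
  ae_all_iff.2 fun i ↦ measure_eq_zero_iff_ae_notMem.1 (pi_hyperplane _ i 0)

end MeasureTheory.Measure

namespace MvPolynomial

theorem finite_setOf_eval_update_eq_zero {ι R : Type*} [CommRing R] [IsDomain R] [DecidableEq ι]
    (P : MvPolynomial ι R) (x : ι → R) (i : ι) {a : R}
    (ha : eval (Function.update x i a) P ≠ 0) :
    {t | eval (Function.update x i t) P = 0}.Finite := by
  set q : Polynomial R := aeval (Function.update (fun h ↦ Polynomial.C (x h)) i Polynomial.X) P
  have hq : ∀ t, q.eval t = eval (Function.update x i t) P := by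
    intro t
    rw [← Polynomial.coe_aeval_eq_eval, ← AlgHom.comp_apply, comp_aeval, ← coe_aeval_eq_eval]
    refine congrArg (fun g ↦ aeval g P) ?_
    funext h
    rcases eq_or_ne h i with rfl | hh <;> simp [Function.update_of_ne, *]
  have hq0 : q ≠ 0 := fun h0 ↦ ha (by rw [← hq, h0, Polynomial.eval_zero])
  exact (Polynomial.finite_setOfPred_isRoot hq0).subset fun t ht ↦ by
    simpa [Polynomial.IsRoot, hq] using ht

end MvPolynomial

section TranslateRatio

variable {G R : Type*} [AddGroup G] [Fintype G] [DecidableEq G]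

open MvPolynomial

noncomputable def translateRatioNumerator [CommRing R] (c : G → R) (j : G) : MvPolynomial G R :=
  ∑ y, C (c y) * X (y - j) * ∏ h ∈ Finset.univ.erase y, X h

theorem eval_translateRatioNumerator [Field R] (c : G → R) (j : G) {φ : G → R}
    (hφ : ∀ h, φ h ≠ 0) :
    eval φ (translateRatioNumerator c j) = (∏ h, φ h) * ∑ y, c y * φ (y - j) / φ y := by
  simp only [translateRatioNumerator, map_sum, map_mul, map_prod, eval_C, eval_X, Finset.mul_sum]
  refine Finset.sum_congr rfl fun y _ ↦ ?_
  rw [← Finset.mul_prod_erase _ _ (Finset.mem_univ y)]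
  field_simp [hφ y]

theorem eval_update_zero_translateRatioNumerator_ne_zero [CommRing R] [IsDomain R] {c : G → R}
    {j g : G} (hj : j ≠ 0) (hc : c g ≠ 0) {x : G → R} (hx : ∀ h ≠ g, x h ≠ 0) :
    eval (Function.update x g 0) (translateRatioNumerator c j) ≠ 0 := by
  simp only [translateRatioNumerator, map_sum, map_mul, map_prod, eval_C, eval_X]
  rw [Finset.sum_eq_single g]
  · have hgj : g - j ≠ g := fun h ↦ hj (sub_eq_self.mp h)
    refine mul_ne_zero (mul_ne_zero hc ?_) (Finset.prod_ne_zero_iff.2 fun h hh ↦ ?_)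
    · rw [Function.update_of_ne hgj]
      exact hx _ hgj
    · have hhg := Finset.ne_of_mem_erase hh
      rw [Function.update_of_ne hhg]
      exact hx h hhg
  · intro y _ hy
    refine mul_eq_zero_of_right _ (Finset.prod_eq_zero (i := g) ?_ (Function.update_self ..))
    exact Finset.mem_erase.2 ⟨Ne.symm hy, Finset.mem_univ g⟩
  · exact fun h ↦ (h (Finset.mem_univ g)).elim

theorem volume_setOf_sum_translateRatio_eq_zero {c : G → ℂ} (hc : c ≠ 0) {j : G} (hj : j ≠ 0) :
    volume {φ : G → ℂ | (∀ h, φ h ≠ 0) ∧ ∑ y, c y * φ (y - j) / φ y = 0} = 0 := by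
  obtain ⟨g, hg⟩ := Function.ne_iff.1 hc
  have hmeas : MeasurableSet {φ : G → ℂ | (∀ h, φ h ≠ 0) ∧ ∑ y, c y * φ (y - j) / φ y = 0} := by
    measurability
  refine Measure.pi_eq_zero_of_forall_update_null hmeas g fun x ↦ ?_
  by_cases hx : ∀ h ≠ g, x h ≠ 0
  · refine Set.Finite.measure_zero ?_ _
    refine (finite_setOf_eval_update_eq_zero _ x g
      (eval_update_zero_translateRatioNumerator_ne_zero hj hg hx)).subset ?_
    rintro t ⟨hne, hsum⟩
    simp [eval_translateRatioNumerator _ _ hne, hsum]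
  · push Not at hx
    obtain ⟨h, hhg, hxh⟩ := hx
    convert measure_empty (μ := (volume : Measure ℂ))
    refine Set.eq_empty_of_forall_notMem fun t ⟨hne, _⟩ ↦ hne h ?_
    rwa [Function.update_of_ne hhg]

end TranslateRatio

section STFT

variable {N : ℕ}

noncomputable def modulate (N : ℕ) (f : ZMod N → ℂ) (ξ : ZMod N) : ZMod N → ℂ :=
  fun y ↦ Complex.exp (2 * Real.pi * Complex.I * ξ.val * y.val / N) * f y

theorem modulate_ne_zero {f : ZMod N → ℂ} (hf : f ≠ 0) (ξ : ZMod N) : modulate N f ξ ≠ 0 := by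
  obtain ⟨y, hy⟩ := Function.ne_iff.1 hf
  exact Function.ne_iff.2 ⟨y, mul_ne_zero (Complex.exp_ne_zero _) hy⟩

variable [NeZero N]

theorem stft_div_apply (φ f : ZMod N → ℂ) (x ξ : ZMod N) :
    stft N φ (f / φ) (x, ξ) = ∑ y, modulate N f ξ y * φ (y - x) / φ y := by
  refine Finset.sum_congr rfl fun y _ ↦ ?_
  simp only [modulate, Pi.div_apply]
  ring

theorem stft_div_zero {φ : ZMod N → ℂ} (hφ : ∀ y, φ y ≠ 0) (f : ZMod N → ℂ) (ξ : ZMod N) :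
    stft N φ (f / φ) (0, ξ) = dft N f ξ := by
  simp only [stft_div_apply, sub_zero, mul_div_assoc, div_self (hφ _), mul_one]
  rfl

theorem ae_stft_div_ne_zero {f : ZMod N → ℂ} (hf : f ≠ 0) :
    ∀ᵐ φ ∂(volume : Measure (ZMod N → ℂ)), ∀ x ξ : ZMod N, x ≠ 0 → (∀ y, φ y ≠ 0) →
      stft N φ (f / φ) (x, ξ) ≠ 0 := by
  refine ae_all_iff.2 fun x ↦ ae_all_iff.2 fun ξ ↦ ?_
  by_cases hx : x = 0
  · exact ae_of_all _ fun _ h ↦ absurd hx h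
  filter_upwards [measure_eq_zero_iff_ae_notMem.1
    (volume_setOf_sum_translateRatio_eq_zero (modulate_ne_zero hf ξ) hx)] with φ hφ _ hne h0
  exact hφ ⟨hne, by rwa [← stft_div_apply]⟩

end STFT

theorem suppSize_div {α : Type*} (f : α → ℂ) {φ : α → ℂ} (hφ : ∀ a, φ a ≠ 0) :
    suppSize (f / φ) = suppSize f :=
  Nat.card_congr (Equiv.subtypeEquivRight fun a ↦ by simp [hφ a])

theorem Nat.card_subtype_ne {G : Type*} [Finite G] (a : G) :
    Nat.card {x : G // x ≠ a} = Nat.card G - 1 := by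
  classical
  have := Fintype.ofFinite G
  simp [Nat.card_eq_fintype_card, Fintype.card_subtype_compl]

theorem suppSize_prod_eq {G : Type*} [Finite G] {F : G × G → ℂ} {u : G → ℂ} (a : G)
    (h : ∀ x ξ, F (x, ξ) ≠ 0 ↔ x ≠ a ∨ u ξ ≠ 0) :
    suppSize F = Nat.card G ^ 2 - Nat.card G + suppSize u := by
  classical
  have hdisj : Disjoint (fun p : G × G ↦ p.1 ≠ a) (fun p ↦ p.1 = a ∧ u p.2 ≠ 0) :=
    Pi.disjoint_iff.2 fun _ ↦ Prop.disjoint_iff.2 fun ⟨hne, heq, _⟩ ↦ hne heq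
  have hoff : Nat.card {p : G × G // p.1 ≠ a} = Nat.card G ^ 2 - Nat.card G := by
    rw [Nat.card_congr (Equiv.prodSubtypeFstEquivSubtypeProd (p := (· ≠ a)) (β := G)),
      Nat.card_prod, Nat.card_subtype_ne, Nat.sub_one_mul, sq]
  have hon : Nat.card {p : G × G // p.1 = a ∧ u p.2 ≠ 0} = suppSize u := by
    rw [Nat.card_congr (Equiv.subtypeProdEquivProd (p := (· = a)) (q := (u · ≠ 0))),
      Nat.card_prod, Nat.card_unique, one_mul]
    rfl
  calc suppSize F = Nat.card {p : G × G // p.1 ≠ a ∨ (p.1 = a ∧ u p.2 ≠ 0)} :=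
        Nat.card_congr (Equiv.subtypeEquivRight fun ⟨x, ξ⟩ ↦ by rw [h]; tauto)
    _ = Nat.card G ^ 2 - Nat.card G + suppSize u := by
      rw [Nat.card_congr (subtypeOrEquiv _ _ hdisj), Nat.card_sum, hoff, hon]

/-- For almost every window `φ ∈ ℂ^N`: whenever `(k, l)` is realized as
`(‖f‖₀, ‖f̂‖₀)` for some nonzero `f`, there is a nonzero `g` with `‖g‖₀ = k`
and `‖V_φ g‖₀ = N² - N + l`. In other words `F ⊆ F_φ` for almost all `φ`. -/
theorem uncertainty_pairs_subset_ae (N : ℕ) [NeZero N] :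
    ∀ᵐ φ ∂(volume : Measure (ZMod N → ℂ)), ∀ k l : ℕ,
      (∃ f : ZMod N → ℂ, f ≠ 0 ∧ suppSize f = k ∧ suppSize (dft N f) = l) →
      ∃ g : ZMod N → ℂ, g ≠ 0 ∧ suppSize g = k ∧
        suppSize (stft N φ g) = N ^ 2 - N + l := by
  refine ae_all_iff.2 fun k ↦ ae_all_iff.2 fun l ↦ ?_
  by_cases hkl : ∃ f : ZMod N → ℂ, f ≠ 0 ∧ suppSize f = k ∧ suppSize (dft N f) = l
  swap
  · exact ae_of_all _ fun _ h ↦ absurd h hkl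
  obtain ⟨f, hf, rfl, rfl⟩ := hkl
  filter_upwards [Measure.ae_forall_ne_zero, ae_stft_div_ne_zero hf] with φ hφ hstft _
  have hsupp : ∀ x ξ, stft N φ (f / φ) (x, ξ) ≠ 0 ↔ x ≠ 0 ∨ dft N f ξ ≠ 0 := by
    intro x ξ
    rcases eq_or_ne x 0 with rfl | hx
    · simp [stft_div_zero hφ]
    · exact iff_of_true (hstft x ξ hx hφ) (Or.inl hx)
  refine ⟨f / φ, fun h0 ↦ hf ?_, suppSize_div f hφ, ?_⟩
  · funext y
    simpa [hφ y] using congrFun h0 y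
  · rw [suppSize_prod_eq 0 hsupp, Nat.card_zmod]
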